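/- (Cascade Lemma) Let S be a finite set with |S| ≥ k, a ∉ S, T = S ∪ {a}, and w : T → ℝ strictly positive. Let (X_1,…,X_k) be a k-sample without replacement from S with respect to w, and define (Y_1,…,Y_k) by: Y_1 = a with probability w(a)/w(T), else Y_1 = X_1; and for 1 ≤ i < k, letting Z_i be the unique element of {X_1,…,X_i, a} \ {Y_1,…,Y_i} and U_i = T \ {Y_1,…,Y_i}, set Y_{i+1} = Z_i with probability w(Z_i)/w(U_i), else Y_{i+1} = X_{i+1} (all randomizations independent of everything else). Then for every i = 1,…,k, the ordered tuple (Y_1,…,Y_i) is an i-sample without replacement from T with respect to w; equivalently, for all pairwise distinct y_1,…,y_i ∈ T, P(Y_1 = y_1, …, Y_i = y_i) = ∏_{j=1}^{i} w(y_j)/(w(T) − ∑_{l<j} w(y_l)). -/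

import Mathlib

/-!
Fix histories `p = (X₀, …, X_{m-1})` and `y = (Y₀, …, Y_{m-1})`. Almost surely `X` is injective
(the fresh values already carry all the mass at every step), and then an induction shows
`{y} ⊆ {p} ∪ {a}` with exactly one leftover element `Z`; the set of unused elements of `T` is
`U = {Z} ∪ (S \ {p})`. On this history the coin gives `Y_m = Z` with probability `w Z / w U`,
and otherwise `Y_m = X_m`. The coins only look at the past, so `X_m` still has the conditional
law `w(·) / w(S \ {p})`; hence every `v ≠ Z` in `U` is chosen with probability
`(1 - w Z / w U) · w v / (w U - w Z) = w v / w U`. Summing over `p`, `Y` satisfies the sequential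
law of a sample without replacement from `T`, and multiplying the conditional probabilities
gives the product formula.
-/

open MeasureTheory Finset

section

variable {Ω α : Type*} {k : ℕ}

section Index

lemma setOf_val_lt_succ (j : Fin k) :
    {l : Fin k | l.val < (j : ℕ) + 1} = insert j {l : Fin k | l.val < (j : ℕ)} := by
  ext l
  simp only [Set.mem_ofPred_eq, Set.mem_insert_iff, Fin.ext_iff]
  omega

lemma filter_val_lt_succ (j : Fin k) :
    (univ.filter fun l : Fin k => l.val < j + 1) =
      insert j (univ.filter fun l : Fin k => l.val < j) := by
  ext l
  simp only [mem_filter, mem_univ, true_and, mem_insert, Fin.ext_iff]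
  omega

lemma Iic_eq_insert_setOf_val_lt (j : Fin k) :
    Set.Iic j = insert j {l : Fin k | l.val < j} := by
  ext l
  simp only [Set.mem_Iic, Set.mem_insert_iff, Set.mem_ofPred_eq, Fin.le_iff_val_le_val,
    Fin.ext_iff]
  omega

end Index

section Prefix

variable [DecidableEq α]

def prefixImage (n : ℕ) (x : Fin k → α) : Finset α :=
  (univ.filter fun l : Fin k => l.val < n).image x

def leftover (a : α) (n : ℕ) (x y : Fin k → α) : Finset α :=
  insert a (prefixImage n x) \ prefixImage n y

lemma mem_prefixImage {n : ℕ} {x : Fin k → α} {c : α} :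
    c ∈ prefixImage n x ↔ ∃ l : Fin k, l.val < n ∧ x l = c := by
  simp [prefixImage]

lemma coe_prefixImage (n : ℕ) (x : Fin k → α) :
    (prefixImage n x : Set α) = x '' {l | l.val < n} := by
  ext c; simp [mem_prefixImage]

lemma prefixImage_congr {n : ℕ} {x x' : Fin k → α} (h : ∀ l : Fin k, l.val < n → x l = x' l) :
    prefixImage n x = prefixImage n x' :=
  image_congr fun l hl => h l (mem_filter.mp hl).2

lemma leftover_congr {a : α} {n : ℕ} {x x' y y' : Fin k → α}
    (hx : ∀ l : Fin k, l.val < n → x l = x' l) (hy : ∀ l : Fin k, l.val < n → y l = y' l) :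
    leftover a n x y = leftover a n x' y' := by
  rw [leftover, leftover, prefixImage_congr hx, prefixImage_congr hy]

lemma prefixImage_zero (x : Fin k → α) : prefixImage 0 x = ∅ := by
  simp [prefixImage]

lemma prefixImage_succ (j : Fin k) (x : Fin k → α) :
    prefixImage (j + 1) x = insert (x j) (prefixImage j x) := by
  ext c
  simp only [mem_prefixImage, mem_insert, Nat.lt_succ_iff_lt_or_eq]
  constructor
  · rintro ⟨l, hl | hl, rfl⟩
    · exact Or.inr ⟨l, hl, rfl⟩
    · exact Or.inl (by rw [Fin.ext hl])
  · rintro (rfl | ⟨l, hl, rfl⟩)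
    · exact ⟨j, Or.inr rfl, rfl⟩
    · exact ⟨l, Or.inl hl, rfl⟩

lemma card_prefixImage_le (n : ℕ) (x : Fin k → α) : (prefixImage n x).card ≤ n :=
  card_image_le.trans (Fin.card_filter_val_lt.trans_le (min_le_right _ _))

lemma card_prefixImage {n : ℕ} (hn : n ≤ k) {x : Fin k → α}
    (hx : Set.InjOn x {l | l.val < n}) : (prefixImage n x).card = n := by
  rw [prefixImage, card_image_of_injOn (by simpa using hx), Fin.card_filter_val_lt,
    min_eq_right hn]

lemma sum_sdiff_prefixImage_pos {S : Finset α} {w : α → ℝ} (hw : ∀ c ∈ S, 0 < w c)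
    {n : ℕ} (hn : n < S.card) (x : Fin k → α) : 0 < ∑ c ∈ S \ prefixImage n x, w c := by
  refine sum_pos (fun c hc => hw c (mem_sdiff.mp hc).1) ?_
  rw [nonempty_iff_ne_empty, Ne, sdiff_eq_empty_iff_subset]
  exact fun hsub => not_lt_of_ge (card_le_card hsub) ((card_prefixImage_le n x).trans_lt hn)

lemma image_filter_lt_eq_prefixImage (j : Fin k) (x : Fin k → α) :
    (univ.filter (· < j)).image x = prefixImage j x :=
  rfl

lemma sum_sdiff_prefixImage {T : Finset α} {w : α → ℝ} {n : ℕ} {y : Fin k → α}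
    (hyT : ∀ l : Fin k, l.val < n → y l ∈ T) (hy : Set.InjOn y {l | l.val < n}) :
    ∑ c ∈ T \ prefixImage n y, w c =
      ∑ c ∈ T, w c - ∑ l ∈ univ.filter (fun l : Fin k => l.val < n), w (y l) := by
  rw [sum_sdiff_eq_sub, prefixImage, sum_image (by simpa using hy)]
  intro c hc
  obtain ⟨l, hl, rfl⟩ := mem_prefixImage.mp hc
  exact hyT l hl

end Prefix

def prefixEvent (X : Fin k → Ω → α) (n : ℕ) (x : Fin k → α) : Set Ω :=
  {ω | ∀ l : Fin k, l.val < n → X l ω = x l}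

section PrefixEvent

variable {X : Fin k → Ω → α}

lemma prefixEvent_zero (x : Fin k → α) : prefixEvent X 0 x = Set.univ := by
  simp [prefixEvent]

lemma prefixEvent_succ (j : Fin k) (x : Fin k → α) :
    prefixEvent X (j + 1) x = prefixEvent X j x ∩ X j ⁻¹' {x j} := by
  ext ω
  simp only [prefixEvent, Set.mem_inter_iff, Set.mem_preimage,
    Set.mem_singleton_iff, Nat.lt_succ_iff_lt_or_eq]
  refine ⟨fun h => ⟨fun l hl => h l (Or.inl hl), h j (Or.inr rfl)⟩, ?_⟩
  rintro ⟨h, hj⟩ l (hl | hl)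
  exacts [h l hl, Fin.ext hl ▸ hj]

lemma prefixEvent_anti {n n' : ℕ} (h : n ≤ n') (x : Fin k → α) :
    prefixEvent X n' x ⊆ prefixEvent X n x :=
  fun _ hω l hl => hω l (hl.trans_le h)

lemma prefixEvent_congr {n : ℕ} {x x' : Fin k → α} (h : ∀ l : Fin k, l.val < n → x l = x' l) :
    prefixEvent X n x = prefixEvent X n x' := by
  ext ω
  exact forall₂_congr fun l hl => by rw [h l hl]

lemma setOf_forall_le_eq_prefixEvent (j : Fin k) (x : Fin k → α) :
    {ω | ∀ l, l ≤ j → X l ω = x l} = prefixEvent X (j + 1) x :=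
  Set.ext fun _ => forall_congr' fun l => by rw [Fin.le_iff_val_le_val, ← Nat.lt_succ_iff]

lemma setOf_forall_lt_eq_prefixEvent (j : Fin k) (x : Fin k → α) :
    {ω | ∀ l, l < j → X l ω = x l} = prefixEvent X j x :=
  rfl

lemma measurableSet_prefixEvent [MeasurableSpace Ω] [MeasurableSpace α]
    [MeasurableSingletonClass α] (hX : ∀ j, Measurable (X j)) (n : ℕ) (x : Fin k → α) :
    MeasurableSet (prefixEvent X n x) := by
  have : prefixEvent X n x = ⋂ (l : Fin k) (_ : l.val < n), X l ⁻¹' {x l} := by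
    ext; simp [prefixEvent]
  rw [this]
  exact .iInter fun l => .iInter fun _ => hX l (measurableSet_singleton _)

end PrefixEvent

section Partition

variable [MeasurableSpace Ω] [MeasurableSpace α] [MeasurableSingletonClass α]
  {μ : Measure Ω} [IsFiniteMeasure μ] {X : Fin k → Ω → α} {S : Finset α}

-- Prefixes of length `n` padded with `a`, so that every prefix has exactly one representative.
def prefixTuples (S : Finset α) (a : α) (n : ℕ) : Finset (Fin k → α) :=
  Fintype.piFinset fun l => if l.val < n then S else {a}

lemma measureReal_eq_sum_prefixTuples (hX : ∀ j, Measurable (X j)) (hXS : ∀ j ω, X j ω ∈ S)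
    (a : α) (n : ℕ) {E : Set Ω} (hE : MeasurableSet E) :
    μ.real E = ∑ p ∈ prefixTuples S a n, μ.real (E ∩ prefixEvent X n p) := by
  have hmem : ∀ {p}, p ∈ prefixTuples S a n → ∀ l : Fin k, ¬ l.val < n → p l = a := by
    intro p hp l hl
    simpa [prefixTuples, hl] using Fintype.mem_piFinset.mp hp l
  rw [← measureReal_biUnion_finset _ fun p _ => hE.inter (measurableSet_prefixEvent hX n p)]
  · congr 1
    refine (Set.iUnion₂_subset fun _ _ => Set.inter_subset_left).antisymm' fun ω hω => ?_
    refine Set.mem_biUnion (x := fun l => if l.val < n then X l ω else a) ?_ ⟨hω, ?_⟩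
    · refine Fintype.mem_piFinset.mpr fun l => ?_
      split_ifs <;> simp [hXS]
    · intro l hl
      simp [hl]
  · intro p hp p' hp' hne
    obtain ⟨l, hl⟩ := Function.ne_iff.mp hne
    have hln : l.val < n := by
      by_contra h
      exact hl ((hmem hp l h).trans (hmem hp' l h).symm)
    refine Set.disjoint_left.mpr fun ω h h' => hl ?_
    rw [← h.2 l hln, h'.2 l hln]

end Partition

section SampleWithoutReplacement

variable [DecidableEq α] [MeasurableSpace Ω] {μ : Measure Ω}

def IsSampleWithoutReplacement (μ : Measure Ω) (S : Finset α) (w : α → ℝ)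
    (X : Fin k → Ω → α) : Prop :=
  ∀ (j : Fin k) (x : Fin k → α), (∀ l : Fin k, l.val < j → x l ∈ S) →
    Set.InjOn x {l | l.val < j} → x j ∈ S \ prefixImage j x →
    μ.real (prefixEvent X (j + 1) x) =
      w (x j) / (∑ c ∈ S \ prefixImage j x, w c) * μ.real (prefixEvent X j x)

theorem IsSampleWithoutReplacement.measureReal_prefixEvent [IsProbabilityMeasure μ] {S : Finset α}
    {w : α → ℝ} {X : Fin k → Ω → α} (hX : IsSampleWithoutReplacement μ S w X) {y : Fin k → α} :
    ∀ n ≤ k, (∀ l : Fin k, l.val < n → y l ∈ S) → Set.InjOn y {l | l.val < n} →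
      μ.real (prefixEvent X n y) =
        ∏ j ∈ univ.filter (fun j : Fin k => j.val < n), w (y j) / ∑ c ∈ S \ prefixImage j y, w c
  | 0, _, _, _ => by simp [prefixEvent_zero]
  | n + 1, hn, hyS, hy => by
    set j : Fin k := ⟨n, hn⟩
    rw [show n + 1 = (j : ℕ) + 1 from rfl, setOf_val_lt_succ, Set.injOn_insert (by simp),
      ← coe_prefixImage] at hy
    rw [show n + 1 = (j : ℕ) + 1 from rfl, filter_val_lt_succ, prod_insert (by simp),
      hX j y (fun l hl => hyS l (Nat.lt_succ_of_lt hl)) hy.1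
        (mem_sdiff.mpr ⟨hyS j (by simp [j]), hy.2⟩),
      measureReal_prefixEvent hX n (by omega) (fun l hl => hyS l (by omega)) hy.1]

end SampleWithoutReplacement

section Injective

variable [DecidableEq α]

lemma injective_of_forall_injOn_imp_notMem {x : Fin k → α}
    (h : ∀ j : Fin k, Set.InjOn x {l | l.val < j} → x j ∉ prefixImage j x) :
    Function.Injective x := by
  have hinj : ∀ n ≤ k, Set.InjOn x {l : Fin k | l.val < n} := by
    intro n
    induction n with
    | zero => intro _; simp
    | succ n ih =>
      intro hn
      have hj := ih (by omega)
      rw [show n + 1 = (⟨n, hn⟩ : Fin k) + 1 from rfl, setOf_val_lt_succ,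
        Set.injOn_insert (by simp), ← coe_prefixImage]
      exact ⟨hj, h _ hj⟩
  simpa [← Set.injOn_univ] using hinj k le_rfl

variable [MeasurableSpace Ω] [MeasurableSpace α] [MeasurableSingletonClass α]
  {μ : Measure Ω} [IsFiniteMeasure μ] {S : Finset α} {w : α → ℝ} {X : Fin k → Ω → α}

lemma IsSampleWithoutReplacement.measureReal_prefixEvent_inter_mem_prefixImage
    (hX : IsSampleWithoutReplacement μ S w X) (hXmeas : ∀ j, Measurable (X j))
    (hXS : ∀ j ω, X j ω ∈ S)
    (hw : ∀ c ∈ S, 0 < w c) (hk : k ≤ S.card) (j : Fin k) {p : Fin k → α}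
    (hpS : ∀ l : Fin k, l.val < j → p l ∈ S) (hp : Set.InjOn p {l | l.val < j}) :
    μ.real (prefixEvent X j p ∩ X j ⁻¹' prefixImage j p) = 0 := by
  set E := prefixEvent X j p
  set P := prefixImage j p
  have hE : MeasurableSet E := measurableSet_prefixEvent hXmeas j p
  have hW : 0 < ∑ c ∈ S \ P, w c := sum_sdiff_prefixImage_pos hw (j.isLt.trans_le hk) p
  have hfiber : ∀ b ∈ S \ P, μ.real (E ∩ X j ⁻¹' {b}) = w b / (∑ c ∈ S \ P, w c) * μ.real E := by
    intro b hb
    obtain ⟨hbS, hbP⟩ := mem_sdiff.mp hb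
    have hagree : ∀ l : Fin k, l.val < j → Function.update p j b l = p l :=
      fun l hl => Function.update_of_ne (Fin.ne_of_lt hl) _ _
    have hlaw := hX j (Function.update p j b) (fun l hl => hagree l hl ▸ hpS l hl)
      (hp.congr fun l hl => (hagree l hl).symm)
      (by rwa [Function.update_self, prefixImage_congr hagree])
    rwa [prefixEvent_succ, prefixEvent_congr hagree, prefixImage_congr hagree,
      Function.update_self] at hlaw
  -- the fresh values `b ∈ S \ P` already carry the whole mass of `E`
  have hfresh : μ.real (E \ X j ⁻¹' P) = μ.real E := by
    have hset : E \ X j ⁻¹' P = ⋃ b ∈ S \ P, E ∩ X j ⁻¹' {b} := by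
      ext ω; simp [hXS]
    rw [hset, measureReal_biUnion_finset, sum_congr rfl hfiber, ← sum_mul, ← sum_div,
      div_self hW.ne', one_mul]
    · intro b _ b' _ hbb'
      exact Set.disjoint_left.mpr fun ω h h' => hbb' (h.2.symm.trans h'.2)
    · exact fun b _ => hE.inter (hXmeas j (measurableSet_singleton b))
  have := measureReal_inter_add_sdiff (μ := μ) (s := E) (hXmeas j P.measurableSet)
  linarith

theorem IsSampleWithoutReplacement.ae_injective (hX : IsSampleWithoutReplacement μ S w X)
    (hXmeas : ∀ j, Measurable (X j)) (hXS : ∀ j ω, X j ω ∈ S) (hw : ∀ c ∈ S, 0 < w c)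
    (hk : k ≤ S.card) : ∀ᵐ ω ∂μ, Function.Injective (X · ω) := by
  have hnew (j : Fin k) :
      ∀ᵐ ω ∂μ, Set.InjOn (X · ω) {l | l.val < j} → X j ω ∉ prefixImage j (X · ω) := by
    set I := {p : Fin k → α | p ∈ Fintype.piFinset (fun _ => S) ∧ Set.InjOn p {l | l.val < j}}
    have hI : I.Countable := ((Fintype.piFinset fun _ => S).finite_toSet.subset
      fun _ hp => hp.1).countable
    rw [ae_iff]
    push Not
    refine measure_mono_null (t := ⋃ p ∈ I, prefixEvent X j p ∩ X j ⁻¹' prefixImage j p)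
      ?_ ((measure_biUnion_null_iff hI).mpr fun p hp => ?_)
    · rintro ω ⟨hinj, hmem⟩
      exact Set.mem_biUnion (x := (X · ω)) ⟨Fintype.mem_piFinset.mpr (hXS · ω), hinj⟩
        ⟨fun _ _ => rfl, hmem⟩
    · exact (measureReal_eq_zero_iff).mp
        (hX.measureReal_prefixEvent_inter_mem_prefixImage hXmeas hXS hw hk j
          (fun l _ => Fintype.mem_piFinset.mp hp.1 l) hp.2)
  filter_upwards [ae_all_iff.mpr hnew] with ω hω
  exact injective_of_forall_injOn_imp_notMem hω

end Injective

section Leftover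

variable [DecidableEq α] {S : Finset α} {a : α} {x y : Fin k → α}

lemma notMem_insert_prefixImage (ha : a ∉ S) (hxS : ∀ l, x l ∈ S) (hx : Function.Injective x)
    (j : Fin k) : x j ∉ insert a (prefixImage j x) := by
  rw [mem_insert, mem_prefixImage, not_or, not_exists]
  exact ⟨fun h => ha (h ▸ hxS j), fun l ⟨hl, h⟩ => Fin.ne_of_lt hl (hx h)⟩

lemma mem_of_leftover_eq_singleton {n : ℕ} {Z : α} (hZ : leftover a n x y = {Z}) :
    Z ∈ insert a (prefixImage n x) ∧ Z ∉ prefixImage n y :=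
  mem_sdiff.mp (hZ.symm ▸ mem_singleton_self Z : Z ∈ leftover a n x y)

lemma exists_leftover_eq_singleton (ha : a ∉ S) (hxS : ∀ l, x l ∈ S) (hx : Function.Injective x)
    {n : ℕ} (hn : n ≤ k) (hsub : prefixImage n y ⊆ insert a (prefixImage n x))
    (hcard : (prefixImage n y).card = n) : ∃ Z, leftover a n x y = {Z} := by
  have hax : a ∉ prefixImage n x := fun h => by
    obtain ⟨l, -, rfl⟩ := mem_prefixImage.mp h
    exact ha (hxS l)
  apply card_eq_one.mp
  rw [leftover, card_sdiff_of_subset hsub, card_insert_of_notMem hax,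
    card_prefixImage hn hx.injOn, hcard]
  omega

lemma prefixImage_subset_insert_and_card (ha : a ∉ S) (hxS : ∀ l, x l ∈ S)
    (hx : Function.Injective x)
    (hy : ∀ (j : Fin k) Z, leftover a j x y = {Z} → y j = Z ∨ y j = x j) :
    ∀ n ≤ k, prefixImage n y ⊆ insert a (prefixImage n x) ∧ (prefixImage n y).card = n
  | 0, _ => by simp [prefixImage_zero]
  | n + 1, hn => by
    set j : Fin k := ⟨n, hn⟩
    obtain ⟨hsub, hcard⟩ := prefixImage_subset_insert_and_card ha hxS hx hy n (by omega)
    obtain ⟨Z, hZ⟩ := exists_leftover_eq_singleton ha hxS hx (by omega) hsub hcard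
    have hZ' := mem_of_leftover_eq_singleton hZ
    have hxj := notMem_insert_prefixImage ha hxS hx j
    have hsub' : insert a (prefixImage n x) ⊆ insert a (prefixImage (j + 1) x) := by
      rw [prefixImage_succ]; exact insert_subset_insert _ (subset_insert _ _)
    have hxj' : x j ∈ insert a (prefixImage (j + 1) x) := by
      rw [prefixImage_succ]; exact mem_insert_of_mem (mem_insert_self _ _)
    have hnew : y j ∉ prefixImage n y ∧ y j ∈ insert a (prefixImage (j + 1) x) := by
      rcases hy j Z hZ with hyj | hyj <;> rw [hyj]
      · exact ⟨hZ'.2, hsub' hZ'.1⟩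
      · exact ⟨fun h => hxj (hsub h), hxj'⟩
    rw [show n + 1 = (j : ℕ) + 1 from rfl, prefixImage_succ j y, card_insert_of_notMem hnew.1,
      hcard]
    exact ⟨insert_subset hnew.2 (hsub.trans hsub'), rfl⟩

lemma insert_sdiff_prefixImage_eq (ha : a ∉ S) {n : ℕ} (hxS : prefixImage n x ⊆ S)
    (hsub : prefixImage n y ⊆ insert a (prefixImage n x)) {Z : α}
    (hZ : leftover a n x y = {Z}) :
    insert a S \ prefixImage n y = insert Z (S \ prefixImage n x) ∧ Z ∉ S \ prefixImage n x := by
  have hmem : ∀ c, (c = a ∨ c ∈ prefixImage n x) ∧ c ∉ prefixImage n y ↔ c = Z := fun c => by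
    rw [← mem_insert, ← mem_sdiff, ← mem_singleton, ← hZ, leftover]
  constructor
  · ext c
    simp only [mem_sdiff, mem_insert]
    grind
  · simp only [mem_sdiff]
    grind

end Leftover

section Cascade

variable [DecidableEq α] [MeasurableSpace Ω] [MeasurableSpace α]

-- `B j` is the event that the `j`-th coin shows heads, in which case the leftover is taken.
structure IsCascade (μ : Measure Ω) (S : Finset α) (a : α) (w : α → ℝ)
    (X Y : Fin k → Ω → α) (B : Fin k → Set Ω) : Prop where
  notMem : a ∉ S
  pos : ∀ c ∈ insert a S, 0 < w c
  le_card : k ≤ S.card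
  measurable_X : ∀ j, Measurable (X j)
  measurable_Y : ∀ j, Measurable (Y j)
  measurableSet_B : ∀ j, MeasurableSet (B j)
  mem_X : ∀ j ω, X j ω ∈ S
  law_X : IsSampleWithoutReplacement μ S w X
  step : ∀ (j : Fin k) ω Z, leftover a j (X · ω) (Y · ω) = {Z} →
    (ω ∈ B j → Y j ω = Z) ∧ (ω ∉ B j → Y j ω = X j ω)
  coin : ∀ (j : Fin k) x y Z, (∀ l, x l ∈ S) → leftover a j x y = {Z} →
    μ.real (B j ∩ (prefixEvent X k x ∩ prefixEvent Y j y)) =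
      w Z / (∑ c ∈ insert a S \ prefixImage j y, w c) *
        μ.real (prefixEvent X k x ∩ prefixEvent Y j y)

namespace IsCascade

variable {μ : Measure Ω} {S : Finset α} {a : α} {w : α → ℝ}
  {X Y : Fin k → Ω → α} {B : Fin k → Set Ω} (h : IsCascade μ S a w X Y B)
include h

lemma prefixImage_subset_insert_and_card_of_injective {ω : Ω}
    (hinj : Function.Injective (X · ω)) {n : ℕ} (hn : n ≤ k) :
    prefixImage n (Y · ω) ⊆ insert a (prefixImage n (X · ω)) ∧ (prefixImage n (Y · ω)).card = n :=
  prefixImage_subset_insert_and_card h.notMem (h.mem_X · ω) hinj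
    (fun j Z hZ => by by_cases hB : ω ∈ B j <;> simp [h.step j ω Z hZ, hB]) n hn

lemma step_iff {ω : Ω} (hinj : Function.Injective (X · ω)) {j : Fin k} {Z : α}
    (hZ : leftover a j (X · ω) (Y · ω) = {Z}) :
    (Y j ω = Z ↔ ω ∈ B j) ∧ ∀ v ≠ Z, (Y j ω = v ↔ ω ∉ B j ∧ X j ω = v) := by
  have hXZ : X j ω ≠ Z := fun hXZ => notMem_insert_prefixImage h.notMem (h.mem_X · ω) hinj j
    (hXZ ▸ (mem_of_leftover_eq_singleton hZ).1)
  by_cases hB : ω ∈ B j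
  · rw [(h.step j ω Z hZ).1 hB]
    exact ⟨iff_of_true rfl hB, fun v hv => iff_of_false hv.symm fun h' => h'.1 hB⟩
  · rw [(h.step j ω Z hZ).2 hB]
    exact ⟨iff_of_false hXZ hB, fun v _ => ⟨fun h' => ⟨hB, h'⟩, And.right⟩⟩

variable [IsFiniteMeasure μ] [MeasurableSingletonClass α]

lemma ae_injective : ∀ᵐ ω ∂μ, Function.Injective (X · ω) :=
  h.law_X.ae_injective h.measurable_X h.mem_X (fun c hc => h.pos c (mem_insert_of_mem hc))
    h.le_card

lemma exists_mem_injective {A : Set Ω} (hA : μ.real A ≠ 0) :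
    ∃ ω ∈ A, Function.Injective (X · ω) :=
  Measure.exists_mem_of_measure_ne_zero_of_ae (fun h0 => hA (by simp [measureReal_def, h0]))
    (ae_restrict_of_ae h.ae_injective)

lemma exists_leftover_of_measureReal_ne_zero {m n : ℕ} (hmn : m ≤ n) (hn : n ≤ k) {p y : Fin k → α}
    (h0 : μ.real (prefixEvent X n p ∩ prefixEvent Y m y) ≠ 0) :
    (∀ l : Fin k, l.val < n → p l ∈ S) ∧ Set.InjOn p {l | l.val < n} ∧
      prefixImage m y ⊆ insert a (prefixImage m p) ∧ ∃ Z, leftover a m p y = {Z} := by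
  obtain ⟨ω, ⟨hωX, hωY⟩, hinj⟩ := h.exists_mem_injective h0
  have hXm : ∀ l : Fin k, l.val < m → X l ω = p l := fun l hl => hωX l (hl.trans_le hmn)
  obtain ⟨hsub, hcard⟩ := h.prefixImage_subset_insert_and_card_of_injective hinj (hmn.trans hn)
  obtain ⟨Z, hZ⟩ := exists_leftover_eq_singleton h.notMem (h.mem_X · ω) hinj (hmn.trans hn)
    hsub hcard
  rw [prefixImage_congr hXm, prefixImage_congr hωY] at hsub
  refine ⟨fun l hl => hωX l hl ▸ h.mem_X l ω, fun l hl l' hl' e => hinj ?_, hsub, Z,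
    (leftover_congr hXm hωY).symm.trans hZ⟩
  simp only [hωX l hl, hωX l' hl', e]

lemma measureReal_coin_inter {j : Fin k} {n : ℕ} (hjn : (j : ℕ) ≤ n) (hn : n ≤ k)
    {p y : Fin k → α} {Z : α} (hZ : leftover a j p y = {Z}) :
    μ.real (B j ∩ (prefixEvent X n p ∩ prefixEvent Y j y)) =
      w Z / (∑ c ∈ insert a S \ prefixImage j y, w c) *
        μ.real (prefixEvent X n p ∩ prefixEvent Y j y) := by
  have hA := (measurableSet_prefixEvent h.measurable_X n p).inter
    (measurableSet_prefixEvent h.measurable_Y j y)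
  rw [measureReal_eq_sum_prefixTuples h.measurable_X h.mem_X a k ((h.measurableSet_B j).inter hA),
    measureReal_eq_sum_prefixTuples h.measurable_X h.mem_X a k hA, mul_sum]
  refine sum_congr rfl fun x hxS => ?_
  rw [Set.inter_assoc]
  by_cases hx : ∀ l : Fin k, l.val < n → x l = p l
  · have hE : prefixEvent X n p ∩ prefixEvent Y j y ∩ prefixEvent X k x =
        prefixEvent X k x ∩ prefixEvent Y j y := by
      rw [Set.inter_right_comm, Set.inter_eq_right.mpr
        ((prefixEvent_anti hn x).trans (prefixEvent_congr hx).subset)]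
    rw [hE, h.coin j x y Z (fun l => by simpa [l.isLt] using Fintype.mem_piFinset.mp hxS l)
      ((leftover_congr (fun l hl => hx l (hl.trans_le hjn))
      fun _ _ => rfl).trans hZ)]
  · push Not at hx
    obtain ⟨l, hl, hne⟩ := hx
    have hE : prefixEvent X n p ∩ prefixEvent Y j y ∩ prefixEvent X k x = ∅ :=
      Set.eq_empty_of_forall_notMem fun ω hω => hne ((hω.2 l l.isLt).symm.trans (hω.1.1 l hl))
    simp [hE]

lemma measureReal_inter_sdiff_coin {j : Fin k} {n : ℕ} (hjn : (j : ℕ) ≤ n) (hn : n ≤ k)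
    {p y : Fin k → α} {Z : α} (hZ : leftover a j p y = {Z}) :
    μ.real ((prefixEvent X n p ∩ prefixEvent Y j y) \ B j) =
      (1 - w Z / (∑ c ∈ insert a S \ prefixImage j y, w c)) *
        μ.real (prefixEvent X n p ∩ prefixEvent Y j y) := by
  have := measureReal_inter_add_sdiff (μ := μ) (s := prefixEvent X n p ∩ prefixEvent Y j y)
    (h.measurableSet_B j)
  rw [Set.inter_comm, h.measureReal_coin_inter hjn hn hZ] at this
  linarith

lemma ae_step_iff {j : Fin k} {n : ℕ} (hjn : (j : ℕ) ≤ n) {p y : Fin k → α} {Z : α}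
    (hZ : leftover a j p y = {Z}) :
    ∀ᵐ ω ∂μ, ω ∈ prefixEvent X n p ∩ prefixEvent Y j y →
      (Y j ω = Z ↔ ω ∈ B j) ∧ ∀ v ≠ Z, (Y j ω = v ↔ ω ∉ B j ∧ X j ω = v) := by
  filter_upwards [h.ae_injective] with ω hinj hω
  exact h.step_iff hinj ((leftover_congr (fun l hl => hω.1 l (hl.trans_le hjn)) hω.2).trans hZ)

lemma measureReal_inter_prefixEvent_succ_of_eq {j : Fin k} {n : ℕ} (hjn : (j : ℕ) ≤ n)
    (hn : n ≤ k) {p y : Fin k → α} {Z : α} (hZ : leftover a j p y = {Z}) (hyZ : y j = Z) :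
    μ.real (prefixEvent X n p ∩ prefixEvent Y (j + 1) y) =
      w Z / (∑ c ∈ insert a S \ prefixImage j y, w c) *
        μ.real (prefixEvent X n p ∩ prefixEvent Y j y) := by
  rw [← h.measureReal_coin_inter hjn hn hZ]
  refine measureReal_congr (Filter.eventuallyEq_set.mpr ?_)
  filter_upwards [h.ae_step_iff hjn hZ] with ω hω
  rw [prefixEvent_succ, ← Set.inter_assoc]
  by_cases hA : ω ∈ prefixEvent X n p ∩ prefixEvent Y j y
  · simp [hA, hyZ, (hω hA).1]
  · simp [hA]

lemma measureReal_inter_prefixEvent_succ_of_ne {j : Fin k} {n : ℕ} (hjn : (j : ℕ) ≤ n)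
    {p y : Fin k → α} {Z : α} (hZ : leftover a j p y = {Z}) (hyZ : y j ≠ Z) :
    μ.real (prefixEvent X n p ∩ prefixEvent Y (j + 1) y) =
      μ.real ((prefixEvent X n p ∩ X j ⁻¹' {y j} ∩ prefixEvent Y j y) \ B j) := by
  refine measureReal_congr (Filter.eventuallyEq_set.mpr ?_)
  filter_upwards [h.ae_step_iff hjn hZ] with ω hω
  rw [prefixEvent_succ]
  by_cases hA : ω ∈ prefixEvent X n p ∩ prefixEvent Y j y
  · have := (hω hA).2 (y j) hyZ
    simp only [Set.mem_inter_iff, Set.mem_preimage, Set.mem_singleton_iff, Set.mem_sdiff]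
      at hA this ⊢
    tauto
  · simp only [Set.mem_inter_iff, Set.mem_preimage, Set.mem_singleton_iff, Set.mem_sdiff] at hA ⊢
    tauto

theorem measureReal_prefixEvent_succ_inter (j : Fin k) {p y : Fin k → α}
    (hpj : p j ∈ S \ prefixImage j p) :
    ∀ m ≤ (j : ℕ), μ.real (prefixEvent X (j + 1) p ∩ prefixEvent Y m y) =
      w (p j) / (∑ c ∈ S \ prefixImage j p, w c) * μ.real (prefixEvent X j p ∩ prefixEvent Y m y)
  | 0, _ => by
    by_cases h0 : μ.real (prefixEvent X j p ∩ prefixEvent Y 0 y) = 0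
    · rw [h0, mul_zero]
      exact measureReal_mono_null (Set.inter_subset_inter_left _ (prefixEvent_anti (by omega) p)) h0
    obtain ⟨hpS, hp, -⟩ := h.exists_leftover_of_measureReal_ne_zero (Nat.zero_le _) j.isLt.le h0
    simpa [prefixEvent_zero] using h.law_X j p hpS hp hpj
  | m + 1, hm => by
    have ih := measureReal_prefixEvent_succ_inter j (y := y) hpj m (by omega)
    obtain ⟨i, rfl⟩ : ∃ i : Fin k, (i : ℕ) = m := ⟨⟨m, by omega⟩, rfl⟩
    by_cases h0 : μ.real (prefixEvent X j p ∩ prefixEvent Y i y) = 0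
    · have hsub : ∀ n ≥ (j : ℕ), prefixEvent X n p ∩ prefixEvent Y (i + 1) y ⊆
          prefixEvent X j p ∩ prefixEvent Y i y := fun n hn =>
        Set.inter_subset_inter (prefixEvent_anti hn p) (prefixEvent_anti (by omega) y)
      rw [measureReal_mono_null (hsub _ (by omega)) h0, measureReal_mono_null (hsub _ le_rfl) h0,
        mul_zero]
    obtain ⟨-, -, -, Z, hZ⟩ := h.exists_leftover_of_measureReal_ne_zero (by omega) j.isLt.le h0
    have hj : (j : ℕ) + 1 ≤ k := j.isLt
    by_cases hyZ : y i = Z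
    · rw [h.measureReal_inter_prefixEvent_succ_of_eq (by omega) hj hZ hyZ,
        h.measureReal_inter_prefixEvent_succ_of_eq (by omega) j.isLt.le hZ hyZ, ih]
      ring
    rw [h.measureReal_inter_prefixEvent_succ_of_ne (n := j + 1) (by omega) hZ hyZ,
      h.measureReal_inter_prefixEvent_succ_of_ne (n := j) (by omega) hZ hyZ]
    by_cases hpy : p i = y i
    · have hX : ∀ n > (i : ℕ), prefixEvent X n p ∩ X i ⁻¹' {y i} = prefixEvent X n p := fun n hn =>
        Set.inter_eq_left.mpr fun ω hω => (hω i hn).trans hpy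
      rw [hX (j + 1) (by omega), hX j (by omega), h.measureReal_inter_sdiff_coin (by omega) hj hZ,
        h.measureReal_inter_sdiff_coin (by omega) j.isLt.le hZ, ih]
      ring
    · have hX : ∀ n > (i : ℕ), prefixEvent X n p ∩ X i ⁻¹' {y i} = ∅ := fun n hn =>
        Set.eq_empty_of_forall_notMem fun ω hω => hpy ((hω.1 i hn).symm.trans hω.2)
      simp [hX (j + 1) (by omega), hX j (by omega)]

lemma measureReal_inter_prefixEvent_succ (j : Fin k) {y : Fin k → α}
    (hyj : y j ∈ insert a S \ prefixImage j y) (p : Fin k → α) :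
    μ.real (prefixEvent X j p ∩ prefixEvent Y (j + 1) y) =
      w (y j) / (∑ c ∈ insert a S \ prefixImage j y, w c) *
        μ.real (prefixEvent X j p ∩ prefixEvent Y j y) := by
  by_cases h0 : μ.real (prefixEvent X j p ∩ prefixEvent Y j y) = 0
  · rw [h0, mul_zero]
    exact measureReal_mono_null (Set.inter_subset_inter_right _ (prefixEvent_anti (by omega) y)) h0
  obtain ⟨hpS, -, hsub, Z, hZ⟩ := h.exists_leftover_of_measureReal_ne_zero le_rfl j.isLt.le h0
  have hP : prefixImage j p ⊆ S := fun c hc => by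
    obtain ⟨l, hl, rfl⟩ := mem_prefixImage.mp hc
    exact hpS l hl
  obtain ⟨hT, hZS⟩ := insert_sdiff_prefixImage_eq h.notMem hP hsub hZ
  by_cases hyZ : y j = Z
  · rw [h.measureReal_inter_prefixEvent_succ_of_eq le_rfl j.isLt.le hZ hyZ, hyZ]
  have hyS : y j ∈ S \ prefixImage j p := by
    rw [hT] at hyj
    exact (mem_insert.mp hyj).resolve_left hyZ
  set q := Function.update p j (y j)
  have hagree : ∀ l : Fin k, l.val < j → q l = p l :=
    fun l hl => Function.update_of_ne (Fin.ne_of_lt hl) _ _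
  have hqj : q j = y j := Function.update_self _ _ _
  have hq : prefixEvent X j p ∩ X j ⁻¹' {y j} = prefixEvent X (j + 1) q := by
    rw [prefixEvent_succ, prefixEvent_congr hagree, hqj]
  have hW : 0 < ∑ c ∈ S \ prefixImage j p, w c :=
    sum_sdiff_prefixImage_pos (fun c hc => h.pos c (mem_insert_of_mem hc))
      (j.isLt.trans_le h.le_card) p
  have hwZ : 0 < w Z := h.pos Z (insert_subset_insert a hP (mem_of_leftover_eq_singleton hZ).1)
  rw [h.measureReal_inter_prefixEvent_succ_of_ne le_rfl hZ hyZ, hq,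
    h.measureReal_inter_sdiff_coin (Nat.le_succ _) j.isLt
      ((leftover_congr hagree fun _ _ => rfl).trans hZ),
    h.measureReal_prefixEvent_succ_inter j (by rwa [hqj, prefixImage_congr hagree]) j le_rfl,
    prefixEvent_congr hagree, hqj, prefixImage_congr hagree, hT, sum_insert hZS]
  field_simp
  ring

theorem isSampleWithoutReplacement : IsSampleWithoutReplacement μ (insert a S) w Y := by
  intro j y _ _ hyj
  have hY (n : ℕ) := measurableSet_prefixEvent h.measurable_Y n y
  rw [measureReal_eq_sum_prefixTuples h.measurable_X h.mem_X a j (hY _),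
    measureReal_eq_sum_prefixTuples h.measurable_X h.mem_X a j (hY _), mul_sum]
  refine sum_congr rfl fun p _ => ?_
  rw [Set.inter_comm, Set.inter_comm (prefixEvent Y j y)]
  exact h.measureReal_inter_prefixEvent_succ j hyj p

end IsCascade

end Cascade

section Conversions

variable [DecidableEq α] {X Y : Fin k → Ω → α} {B : Fin k → Set Ω} {a : α}

lemma step_of_zero_of_succ
    (hY0 : ∀ (h0 : 0 < k) (ω : Ω),
      (ω ∈ B ⟨0, h0⟩ → Y ⟨0, h0⟩ ω = a) ∧ (ω ∉ B ⟨0, h0⟩ → Y ⟨0, h0⟩ ω = X ⟨0, h0⟩ ω))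
    (hYsucc : ∀ (i : ℕ) (hi : i + 1 < k) (ω : Ω) (Z : α),
      insert a ((univ.filter fun l : Fin k => l.val ≤ i).image fun l => X l ω) \
          ((univ.filter fun l : Fin k => l.val ≤ i).image fun l => Y l ω) = {Z} →
      (ω ∈ B ⟨i + 1, hi⟩ → Y ⟨i + 1, hi⟩ ω = Z) ∧
        (ω ∉ B ⟨i + 1, hi⟩ → Y ⟨i + 1, hi⟩ ω = X ⟨i + 1, hi⟩ ω))
    (j : Fin k) (ω : Ω) (Z : α) (hZ : leftover a j (X · ω) (Y · ω) = {Z}) :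
    (ω ∈ B j → Y j ω = Z) ∧ (ω ∉ B j → Y j ω = X j ω) := by
  obtain ⟨_ | i, hj⟩ := j
  · obtain rfl : a = Z := by simpa [leftover, prefixImage_zero] using hZ
    exact hY0 hj ω
  · refine hYsucc i hj ω Z ?_
    simpa [leftover, prefixImage, Nat.lt_succ_iff] using hZ

variable [MeasurableSpace Ω] {μ : Measure Ω} {S : Finset α} {w : α → ℝ}

lemma isSampleWithoutReplacement_of_measure_eq (hw : ∀ c ∈ S, 0 < w c)
    (hX : ∀ (j : Fin k) (x : Fin k → α), (∀ l, l ≤ j → x l ∈ S) →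
      (∀ l l', l ≤ j → l' ≤ j → l ≠ l' → x l ≠ x l') →
      μ {ω | ∀ l, l ≤ j → X l ω = x l} =
        ENNReal.ofReal (w (x j) / ∑ c ∈ S \ (univ.filter (· < j)).image x, w c) *
          μ {ω | ∀ l, l < j → X l ω = x l}) :
    IsSampleWithoutReplacement μ S w X := by
  intro j x hxS hx hxj
  have hinj : Set.InjOn x (Set.Iic j) := by
    rw [Iic_eq_insert_setOf_val_lt, Set.injOn_insert (by simp), ← coe_prefixImage]
    exact ⟨hx, (mem_sdiff.mp hxj).2⟩
  have hmem : ∀ l ≤ j, x l ∈ S := fun l hl =>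
    (Fin.le_iff_val_le_val.mp hl).lt_or_eq.elim (hxS l) fun e => Fin.ext e ▸ (mem_sdiff.mp hxj).1
  have hlaw := congrArg ENNReal.toReal
    (hX j x hmem fun l l' hl hl' hne e => hne (hinj (Set.mem_Iic.mpr hl) (Set.mem_Iic.mpr hl') e))
  rwa [ENNReal.toReal_mul, ENNReal.toReal_ofReal (div_nonneg (hw _ (mem_sdiff.mp hxj).1).le
    (sum_nonneg fun c hc => (hw c (mem_sdiff.mp hc).1).le)), setOf_forall_le_eq_prefixEvent,
    setOf_forall_lt_eq_prefixEvent, image_filter_lt_eq_prefixImage] at hlaw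

lemma coin_of_measure_eq (hw : ∀ c ∈ insert a S, 0 < w c)
    (hBcond : ∀ (i : Fin k) (x y : Fin k → α) (Z : α),
      insert a ((univ.filter (· < i)).image x) \ ((univ.filter (· < i)).image y) = {Z} →
      μ (B i ∩ {ω | (∀ l, X l ω = x l) ∧ ∀ l, l < i → Y l ω = y l}) =
        ENNReal.ofReal (w Z / ∑ c ∈ (insert a S) \ (univ.filter (· < i)).image y, w c) *
          μ {ω | (∀ l, X l ω = x l) ∧ ∀ l, l < i → Y l ω = y l})
    (j : Fin k) (x y : Fin k → α) (Z : α) (hxS : ∀ l, x l ∈ S) (hZ : leftover a j x y = {Z}) :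
    μ.real (B j ∩ (prefixEvent X k x ∩ prefixEvent Y j y)) =
      w Z / (∑ c ∈ insert a S \ prefixImage j y, w c) *
        μ.real (prefixEvent X k x ∩ prefixEvent Y j y) := by
  have hevent : {ω | (∀ l, X l ω = x l) ∧ ∀ l, l < j → Y l ω = y l} =
      prefixEvent X k x ∩ prefixEvent Y j y :=
    Set.ext fun ω => and_congr ⟨fun h l _ => h l, fun h l => h l l.isLt⟩ Iff.rfl
  have hZT : Z ∈ insert a S := insert_subset_insert a
    (fun c hc => by obtain ⟨l, -, rfl⟩ := mem_prefixImage.mp hc; exact hxS l)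
    (mem_of_leftover_eq_singleton hZ).1
  have hcoin := congrArg ENNReal.toReal (hBcond j x y Z hZ)
  rwa [ENNReal.toReal_mul, ENNReal.toReal_ofReal (div_nonneg (hw Z hZT).le
    (sum_nonneg fun c hc => (hw c (mem_sdiff.mp hc).1).le)), hevent,
    image_filter_lt_eq_prefixImage] at hcoin

end Conversions

end

/-- **Cascade Lemma.**  Let `S` be a finite set with `|S| ≥ k`, `a ∉ S`,
`T = insert a S`, and `w` strictly positive on `T`.  Let `(X 0, …, X (k-1))` be a
`k`-sample without replacement from `S` with respect to `w` (sequential definition,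
phrased multiplicatively).  Define `(Y 0, …, Y (k-1))` by the cascade construction:
`Y 0 = a` on the event `B 0` (which, conditionally on any history, has probability
`w a / w T`), else `Y 0 = X 0`; and for `i + 1 < k`, letting `Z` be the unique element of
`{X 0, …, X i, a} \ {Y 0, …, Y i}` and `U i = T \ {Y 0, …, Y i}`, set `Y (i+1) = Z` on the
event `B (i+1)` (which, conditionally on any history, has probability `w Z / w (U i)`),
else `Y (i+1) = X (i+1)`; the coin flips being independent of everything else, as
expressed by the conditional-probability hypothesis `hBcond`.  Then for every `i < k`
the tuple `(Y 0, …, Y i)` is an `(i+1)`-sample without replacement from `T`: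
for all pairwise distinct `y 0, …, y i ∈ T`,
`P(Y 0 = y 0, …, Y i = y i) = ∏_{j ≤ i} w (y j) / (w T − ∑_{l < j} w (y l))`. -/
theorem statement7 {Ω α : Type*} [MeasurableSpace Ω] [MeasurableSpace α]
    [MeasurableSingletonClass α] [DecidableEq α]
    (μ : Measure Ω) [IsProbabilityMeasure μ]
    (S : Finset α) (a : α) (ha : a ∉ S)
    (w : α → ℝ) (hw : ∀ c ∈ insert a S, 0 < w c)
    (k : ℕ) (hk : k ≤ S.card)
    (X : Fin k → Ω → α)
    (hXmeas : ∀ j, Measurable (X j))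
    (hXS : ∀ (j : Fin k) (ω : Ω), X j ω ∈ S)
    -- `X` is a `k`-sample without replacement from `S` (sequential definition):
    (hXlaw : ∀ (j : Fin k) (x : Fin k → α),
      (∀ l, l ≤ j → x l ∈ S) →
      (∀ l l', l ≤ j → l' ≤ j → l ≠ l' → x l ≠ x l') →
      μ {ω | ∀ l, l ≤ j → X l ω = x l} =
        ENNReal.ofReal
            (w (x j) / ∑ c ∈ S \ (Finset.univ.filter (· < j)).image x, w c) *
          μ {ω | ∀ l, l < j → X l ω = x l})
    (B : Fin k → Set Ω) (hBmeas : ∀ i, MeasurableSet (B i))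
    (Y : Fin k → Ω → α) (hYmeas : ∀ i, Measurable (Y i))
    -- the cascade update rules:
    (hY0 : ∀ (h0 : 0 < k) (ω : Ω),
      (ω ∈ B ⟨0, h0⟩ → Y ⟨0, h0⟩ ω = a) ∧ (ω ∉ B ⟨0, h0⟩ → Y ⟨0, h0⟩ ω = X ⟨0, h0⟩ ω))
    (hYsucc : ∀ (i : ℕ) (hi : i + 1 < k) (ω : Ω) (Z : α),
      insert a ((Finset.univ.filter fun l : Fin k => l.val ≤ i).image fun l => X l ω) \
          ((Finset.univ.filter fun l : Fin k => l.val ≤ i).image fun l => Y l ω) = {Z} →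
      (ω ∈ B ⟨i + 1, hi⟩ → Y ⟨i + 1, hi⟩ ω = Z) ∧
        (ω ∉ B ⟨i + 1, hi⟩ → Y ⟨i + 1, hi⟩ ω = X ⟨i + 1, hi⟩ ω))
    -- the coin `B i` lands heads with (conditional) probability `w Z / w (U (i-1))`,
    -- independently of everything else:
    (hBcond : ∀ (i : Fin k) (x y : Fin k → α) (Z : α),
      insert a ((Finset.univ.filter (· < i)).image x) \
          ((Finset.univ.filter (· < i)).image y) = {Z} →
      μ (B i ∩ {ω | (∀ l, X l ω = x l) ∧ ∀ l, l < i → Y l ω = y l}) =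
        ENNReal.ofReal
            (w Z /
              ∑ c ∈ (insert a S) \ (Finset.univ.filter (· < i)).image y, w c) *
          μ {ω | (∀ l, X l ω = x l) ∧ ∀ l, l < i → Y l ω = y l}) :
    ∀ (i : Fin k) (y : Fin k → α),
      (∀ l, l ≤ i → y l ∈ insert a S) →
      (∀ l l', l ≤ i → l' ≤ i → l ≠ l' → y l ≠ y l') →
      μ {ω | ∀ l, l ≤ i → Y l ω = y l} =
        ENNReal.ofReal (∏ j ∈ Finset.univ.filter (· ≤ i),
          w (y j) /
            ((∑ c ∈ insert a S, w c) - ∑ l ∈ Finset.univ.filter (· < j), w (y l))) := by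
  have hC : IsCascade μ S a w X Y B :=
    { notMem := ha, pos := hw, le_card := hk, measurable_X := hXmeas, measurable_Y := hYmeas,
      measurableSet_B := hBmeas, mem_X := hXS
      law_X :=
        isSampleWithoutReplacement_of_measure_eq (fun c hc => hw c (mem_insert_of_mem hc)) hXlaw
      step := step_of_zero_of_succ hY0 hYsucc
      coin := coin_of_measure_eq hw hBcond }
  intro i y hyT hyd
  have hlt (l : Fin k) : l.val < i + 1 ↔ l ≤ i := by rw [Fin.le_iff_val_le_val, Nat.lt_succ_iff]
  have hy : Set.InjOn y {l : Fin k | l.val < i + 1} := fun l hl l' hl' e =>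
    not_not.mp fun hne => hyd l l' ((hlt l).mp hl) ((hlt l').mp hl') hne e
  rw [setOf_forall_le_eq_prefixEvent, ← ofReal_measureReal,
    hC.isSampleWithoutReplacement.measureReal_prefixEvent (i + 1) i.isLt
      (fun l hl => hyT l ((hlt l).mp hl)) hy]
  congr 1
  refine prod_congr (by ext l; simp [hlt]) fun j hj => ?_
  have hji : (j : ℕ) < i + 1 := (hlt j).mpr (mem_filter.mp hj).2
  rw [sum_sdiff_prefixImage (fun l hl => hyT l ((hlt l).mp (by omega)))
    (hy.mono fun l (hl : l.val < j) => (by omega : l.val < i + 1))]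
  rfl
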